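/- Let k ≥ 2, let M be a matroid on the finite ground set V with rank r ≥ 1, let f : (k+1)^V → ℝ be orthant submodular and pairwise monotone with f(0) ≥ 0, let ε ≥ 0, and let f̂ : (k+1)^V → ℝ satisfy |f(x) − f̂(x)| ≤ ε for all x. Let s^{(0)} = 0, and for j = 1, …, r let s^{(j)} = s^{(j−1)}[e_j ↦ i_j], where supp(s^{(j−1)}) ∪ {e_j} is independent in M with e_j ∉ supp(s^{(j−1)}), and Δ_{e_j,i_j} f̂(s^{(j−1)}) ≥ Δ_{e,i} f̂(s^{(j−1)}) for every e ∉ supp(s^{(j−1)}) with supp(s^{(j−1)}) ∪ {e} independent and every i ∈ {1,…,k}. Then for every o ∈ (k+1)^V whose support supp(o) is a basis of M, the output s = s^{(r)} satisfies f(s) ≥ (1/3)·f(o) − (4/3)·(r+1)·ε. -/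

import Mathlib

/-!
Along the greedy run keep an `O` with `s^{(j)} ⪯ O` whose support is a basis, starting from
`O = o`. At step `j` a basis exchange removes some `o_j ∈ supp O \ supp s^{(j-1)}` and puts the
greedy pair `(e_j, i_j)` in its place; orthant submodularity, pairwise monotonicity (against a
third label, which exists as `k ≥ 2`) and greediness for `f̂` bound the loss `f(O) − f(O')` by
`2 Δ_{e_j,i_j} f̂(s^{(j-1)}) + 4ε`. After `r` steps `O = s`, and telescoping gives
`f(o) − f(s) ≤ 2 (f̂(s) − f̂(0)) + 4rε`, so `3 f(s) ≥ f(o) − 4(r+1)ε + 2 f(0)`.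
-/

namespace Stmt11

variable {V : Type*}

/-- A matroid on `V`, given by its collection of independent (finite) subsets. -/
structure FinMatroid (V : Type*) [DecidableEq V] where
  Indep : Finset V → Prop
  indep_empty : Indep ∅
  indep_subset : ∀ ⦃A B : Finset V⦄, A ⊆ B → Indep B → Indep A
  indep_exchange : ∀ ⦃A B : Finset V⦄, Indep A → Indep B → A.card < B.card →
    ∃ x ∈ B \ A, Indep (insert x A)

/-- A basis is a maximal independent set. -/
def FinMatroid.IsBasis [DecidableEq V] (M : FinMatroid V) (B : Finset V) : Prop :=
  M.Indep B ∧ ∀ ⦃A : Finset V⦄, M.Indep A → B ⊆ A → A = B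

/-- Marginal gain `Δ_{e,i} f(x) = f(x[e↦i]) − f(x)`. -/
def marg {k : ℕ} [DecidableEq V] (f : (V → Fin (k+1)) → ℝ)
    (x : V → Fin (k+1)) (e : V) (i : Fin (k+1)) : ℝ :=
  f (Function.update x e i) - f x

/-- `x ⪯ y` : `y` agrees with `x` on the support of `x`. -/
def preceq {k : ℕ} (x y : V → Fin (k+1)) : Prop :=
  ∀ e, x e ≠ 0 → y e = x e

def PairwiseMonotone {k : ℕ} [DecidableEq V] (f : (V → Fin (k+1)) → ℝ) : Prop :=
  ∀ x : V → Fin (k+1), ∀ e, x e = 0 → ∀ i j : Fin (k+1), i ≠ 0 → j ≠ 0 → i ≠ j →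
    marg f x e i + marg f x e j ≥ 0

def OrthantSubmodular {k : ℕ} [DecidableEq V] (f : (V → Fin (k+1)) → ℝ) : Prop :=
  ∀ x y : V → Fin (k+1), preceq x y → ∀ e, y e = 0 → ∀ i : Fin (k+1), i ≠ 0 →
    marg f x e i ≥ marg f y e i

/-- The support of `x` as a finset. -/
def suppF {k : ℕ} [Fintype V] [DecidableEq V] (x : V → Fin (k+1)) : Finset V :=
  Finset.univ.filter (fun v => x v ≠ 0)

namespace FinMatroid

variable [DecidableEq V] (M : FinMatroid V)

lemma exists_isBasis_superset [Fintype V] {A : Finset V} (hA : M.Indep A) :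
    ∃ B, A ⊆ B ∧ M.IsBasis B := by
  classical
  obtain ⟨B, hB, hmax⟩ := Finset.exists_max_image
    ((Finset.univ : Finset V).powerset.filter fun B => A ⊆ B ∧ M.Indep B) Finset.card
    ⟨A, by simpa using hA⟩
  simp only [Finset.mem_filter, Finset.mem_powerset, Finset.subset_univ, true_and] at hB hmax
  refine ⟨B, hB.1, hB.2, fun C hC hBC => ?_⟩
  exact (Finset.eq_of_subset_of_card_le hBC (hmax C ⟨hB.1.trans hBC, hC⟩)).symm

lemma isBasis_of_indep_of_card_eq [Fintype V] {r : ℕ}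
    (hrank : ∀ B : Finset V, M.IsBasis B → B.card = r) {C : Finset V}
    (hC : M.Indep C) (hCr : C.card = r) : M.IsBasis C := by
  obtain ⟨B, hCB, hB⟩ := M.exists_isBasis_superset hC
  rwa [Finset.eq_of_subset_of_card_le hCB (by rw [hrank B hB, hCr])]

lemma card_le_of_indep [Fintype V] {r : ℕ}
    (hrank : ∀ B : Finset V, M.IsBasis B → B.card = r) {C : Finset V}
    (hC : M.Indep C) : C.card ≤ r := by
  obtain ⟨B, hCB, hB⟩ := M.exists_isBasis_superset hC
  exact hrank B hB ▸ Finset.card_le_card hCB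

lemma exists_indep_superset_subset_union {A B : Finset V} (hA : M.Indep A) (hB : M.Indep B)
    (hAB : A.card ≤ B.card) : ∃ C, A ⊆ C ∧ C ⊆ A ∪ B ∧ M.Indep C ∧ C.card = B.card := by
  classical
  obtain ⟨C, hC, hmax⟩ := Finset.exists_max_image
    ((A ∪ B).powerset.filter fun C => A ⊆ C ∧ M.Indep C ∧ C.card ≤ B.card) Finset.card
    ⟨A, Finset.mem_filter.mpr
      ⟨Finset.mem_powerset.mpr Finset.subset_union_left, subset_rfl, hA, hAB⟩⟩
  simp only [Finset.mem_filter, Finset.mem_powerset] at hC hmax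
  obtain ⟨hCAB, hAC, hCi, hCB⟩ := hC
  refine ⟨C, hAC, hCAB, hCi, hCB.antisymm (not_lt.mp fun hlt => ?_)⟩
  obtain ⟨x, hx, hxC⟩ := M.indep_exchange hCi hB hlt
  rw [Finset.mem_sdiff] at hx
  have hcard : (insert x C).card = C.card + 1 := Finset.card_insert_of_notMem hx.2
  have := hmax (insert x C) ⟨Finset.insert_subset (Finset.mem_union_right _ hx.1) hCAB,
    hAC.trans (Finset.subset_insert _ _), hxC, by omega⟩
  omega

lemma exists_isBasis_insert_erase [Fintype V] {r : ℕ}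
    (hrank : ∀ B : Finset V, M.IsBasis B → B.card = r) {A B : Finset V} {e : V}
    (hB : M.IsBasis B) (hAB : A ⊆ B) (heA : e ∉ A) (hA : M.Indep (insert e A)) :
    ∃ b ∈ B \ A, e ∉ B.erase b ∧ M.IsBasis (insert e (B.erase b)) := by
  have hBr := hrank B hB
  obtain ⟨C, hAC, hCB, hC, hCr⟩ := M.exists_indep_superset_subset_union hA hB.1
    (hBr ▸ M.card_le_of_indep hrank hA)
  have heC : e ∈ C := hAC (Finset.mem_insert_self e A)
  have hDB : C.erase e ⊆ B := fun w hw => by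
    obtain ⟨hwe, hwC⟩ := Finset.mem_erase.mp hw
    rcases Finset.mem_union.mp (hCB hwC) with h | h
    · exact hAB ((Finset.mem_insert.mp h).resolve_left hwe)
    · exact h
  obtain ⟨b, hb⟩ : ∃ b, B \ C.erase e = {b} := by
    rw [← Finset.card_eq_one, Finset.card_sdiff_of_subset hDB, Finset.card_erase_of_mem heC]
    have := Finset.card_pos.mpr ⟨e, heC⟩
    omega
  have hbB : b ∈ B \ C.erase e := hb ▸ Finset.mem_singleton_self b
  have hBb : B.erase b = C.erase e := by
    ext w
    constructor
    · intro hw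
      obtain ⟨hwb, hwB⟩ := Finset.mem_erase.mp hw
      by_contra hwD
      exact hwb (Finset.mem_singleton.mp (hb ▸ Finset.mem_sdiff.mpr ⟨hwB, hwD⟩))
    · intro hw
      exact Finset.mem_erase.mpr ⟨fun hwb => (Finset.mem_sdiff.mp hbB).2 (hwb ▸ hw), hDB hw⟩
  have hAD : A ⊆ C.erase e := fun w hw =>
    Finset.mem_erase.mpr ⟨fun h => heA (h ▸ hw), hAC (Finset.mem_insert_of_mem hw)⟩
  refine ⟨b, Finset.mem_sdiff.mpr ⟨(Finset.mem_sdiff.mp hbB).1,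
    fun hbA => (Finset.mem_sdiff.mp hbB).2 (hAD hbA)⟩, ?_, ?_⟩
  · rw [hBb]; exact Finset.notMem_erase e C
  · rw [hBb, Finset.insert_erase heC]
    exact M.isBasis_of_indep_of_card_eq hrank hC (hCr.trans hBr)

end FinMatroid

section Support

variable {k : ℕ}

lemma mem_suppF [Fintype V] [DecidableEq V] {x : V → Fin (k+1)} {v : V} :
    v ∈ suppF x ↔ x v ≠ 0 := by simp [suppF]

lemma suppF_update_of_ne_zero [Fintype V] [DecidableEq V] (x : V → Fin (k+1)) (v : V)
    {i : Fin (k+1)} (hi : i ≠ 0) :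
    suppF (Function.update x v i) = insert v (suppF x) := by
  ext w
  by_cases h : w = v <;> simp [suppF, Function.update_apply, h, hi]

lemma suppF_update_zero [Fintype V] [DecidableEq V] (x : V → Fin (k+1)) (v : V) :
    suppF (Function.update x v 0) = (suppF x).erase v := by
  ext w
  by_cases h : w = v <;> simp [suppF, Function.update_apply, h]

lemma suppF_subset_of_preceq [Fintype V] [DecidableEq V] {x y : V → Fin (k+1)}
    (h : preceq x y) : suppF x ⊆ suppF y := fun v hv => by
  rw [mem_suppF] at hv ⊢
  rwa [h v hv]

lemma eq_of_preceq_of_card_suppF_le [Fintype V] [DecidableEq V] {x y : V → Fin (k+1)}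
    (h : preceq x y) (hcard : (suppF y).card ≤ (suppF x).card) : x = y := by
  have hsupp := Finset.eq_of_subset_of_card_le (suppF_subset_of_preceq h) hcard
  funext v
  by_cases hv : x v = 0
  · have hvy : v ∉ suppF y := by rw [← hsupp, mem_suppF, not_not]; exact hv
    rw [mem_suppF, not_not] at hvy
    rw [hv, hvy]
  · exact (h v hv).symm

lemma exists_ne_zero_ne (hk : 2 ≤ k) (t : Fin (k+1)) : ∃ b : Fin (k+1), b ≠ 0 ∧ b ≠ t := by
  by_cases ht : t = ⟨1, by omega⟩
  · exact ⟨⟨2, by omega⟩, by simp [Fin.ext_iff], by simp [ht, Fin.ext_iff]⟩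
  · exact ⟨⟨1, by omega⟩, by simp [Fin.ext_iff], Ne.symm ht⟩

end Support

section Greedy

variable {k : ℕ} [DecidableEq V] {f fh : (V → Fin (k+1)) → ℝ} {ε : ℝ}

lemma marg_le_marg_add (hclose : ∀ x, |f x - fh x| ≤ ε) (x : V → Fin (k+1)) (v : V)
    (i : Fin (k+1)) : marg f x v i ≤ marg fh x v i + 2 * ε := by
  have h1 := abs_le.mp (hclose (Function.update x v i))
  have h2 := abs_le.mp (hclose x)
  simp only [marg]
  linarith [h1.1, h2.2]

/-- The loss at `o` is bounded by orthant submodularity and greediness, the possibly negative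
gain of `t` at `e` by pairwise monotonicity against a third label `b`. -/
lemma sub_le_two_mul_marg (hos : OrthantSubmodular f) (hpm : PairwiseMonotone f)
    (hclose : ∀ x, |f x - fh x| ≤ ε) {x y : V → Fin (k+1)} (hxy : preceq x y) {o e : V}
    {a t b : Fin (k+1)} (hyo : y o = 0) (hye : y e = 0) (ha : a ≠ 0) (ht : t ≠ 0)
    (hb : b ≠ 0) (hbt : b ≠ t) (hoa : marg fh x o a ≤ marg fh x e t)
    (heb : marg fh x e b ≤ marg fh x e t) :
    f (Function.update y o a) - f (Function.update y e t) ≤ 2 * marg fh x e t + 4 * ε := by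
  have hloss : marg f y o a ≤ marg f x o a := hos x y hxy o hyo a ha
  have hgain : 0 ≤ marg f y e t + marg f y e b := hpm y e hye t b ht hb hbt.symm
  have hb_sub : marg f y e b ≤ marg f x e b := hos x y hxy e hye b hb
  have hclose_oa := marg_le_marg_add hclose x o a
  have hclose_eb := marg_le_marg_add hclose x e b
  simp only [marg] at *
  linarith

def IsGreedyStep [Fintype V] (M : FinMatroid V) (fh : (V → Fin (k+1)) → ℝ)
    (x : V → Fin (k+1)) (e : V) (t : Fin (k+1)) : Prop :=
  t ≠ 0 ∧ x e = 0 ∧ M.Indep (insert e (suppF x)) ∧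
    ∀ v, x v = 0 → M.Indep (insert v (suppF x)) → ∀ i : Fin (k+1), i ≠ 0 →
      marg fh x e t ≥ marg fh x v i

variable [Fintype V] {M : FinMatroid V} {r : ℕ}

lemma IsGreedyStep.exists_isBasis_update (hk : 2 ≤ k)
    (hrank : ∀ B : Finset V, M.IsBasis B → B.card = r)
    (hos : OrthantSubmodular f) (hpm : PairwiseMonotone f) (hclose : ∀ x, |f x - fh x| ≤ ε)
    {x : V → Fin (k+1)} {e : V} {t : Fin (k+1)} (hstep : IsGreedyStep M fh x e t)
    {O : V → Fin (k+1)} (hxO : preceq x O) (hO : M.IsBasis (suppF O)) :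
    ∃ O', preceq (Function.update x e t) O' ∧ M.IsBasis (suppF O') ∧
      f O - f O' ≤ 2 * marg fh x e t + 4 * ε := by
  obtain ⟨ht, hxe, hind, hgreedy⟩ := hstep
  obtain ⟨o, ho, heO, hbasis⟩ := M.exists_isBasis_insert_erase hrank hO
    (suppF_subset_of_preceq hxO) (by rwa [mem_suppF, not_not]) hind
  rw [Finset.mem_sdiff, mem_suppF, mem_suppF, not_not] at ho
  obtain ⟨hOo, hxo⟩ := ho
  set y := Function.update O o 0 with hy
  have hxy : preceq x y := fun v hv => by
    rw [hy, Function.update_of_ne (by rintro rfl; exact hv hxo)]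
    exact hxO v hv
  have hyo : y o = 0 := Function.update_self o 0 O
  have hye : y e = 0 := by
    by_cases heo : e = o
    · rwa [heo]
    · rw [Finset.mem_erase, mem_suppF, not_and, not_not] at heO
      rw [hy, Function.update_of_ne heo]
      exact heO heo
  have hyO : Function.update y o (O o) = O := by
    rw [Function.update_idem, Function.update_eq_self]
  obtain ⟨b, hb, hbt⟩ := exists_ne_zero_ne hk t
  have hindo : M.Indep (insert o (suppF x)) := M.indep_subset
    (Finset.insert_subset (mem_suppF.mpr hOo) (suppF_subset_of_preceq hxO)) hO.1
  refine ⟨Function.update y e t, fun v hv => ?_, ?_, ?_⟩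
  · by_cases hve : v = e
    · subst hve; simp
    · rw [Function.update_of_ne hve] at hv
      rw [Function.update_of_ne hve, Function.update_of_ne hve]
      exact hxy v hv
  · rwa [suppF_update_of_ne_zero _ _ ht, suppF_update_zero]
  · have := sub_le_two_mul_marg hos hpm hclose hxy hyo hye hOo ht hb hbt
      (hgreedy o hxo hindo (O o) hOo) (hgreedy e hxe hind b hb)
    rwa [hyO] at this

variable {s : ℕ → V → Fin (k+1)} {e : ℕ → V} {t : ℕ → Fin (k+1)} {n : ℕ}

lemma card_suppF_greedy
    (hstep : ∀ j < n, s (j+1) = Function.update (s j) (e j) (t j) ∧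
      IsGreedyStep M fh (s j) (e j) (t j)) :
    (suppF (s n)).card = (suppF (s 0)).card + n := by
  induction n with
  | zero => rfl
  | succ n ih =>
    obtain ⟨hs, ht, hse, -⟩ := hstep n n.lt_succ_self
    rw [hs, suppF_update_of_ne_zero _ _ ht,
      Finset.card_insert_of_notMem (by rwa [mem_suppF, not_not]),
      ih fun j hj => hstep j (hj.trans n.lt_succ_self)]
    rfl

/-- `O` is the paper's `o^{(n)}`. -/
lemma exists_isBasis_of_greedy (hk : 2 ≤ k)
    (hrank : ∀ B : Finset V, M.IsBasis B → B.card = r)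
    (hos : OrthantSubmodular f) (hpm : PairwiseMonotone f) (hclose : ∀ x, |f x - fh x| ≤ ε)
    (hstep : ∀ j < n, s (j+1) = Function.update (s j) (e j) (t j) ∧
      IsGreedyStep M fh (s j) (e j) (t j))
    {o : V → Fin (k+1)} (hso : preceq (s 0) o) (ho : M.IsBasis (suppF o)) :
    ∃ O, preceq (s n) O ∧ M.IsBasis (suppF O) ∧
      f o - f O ≤ 2 * (fh (s n) - fh (s 0)) + 4 * n * ε := by
  induction n with
  | zero => exact ⟨o, hso, ho, by simp⟩
  | succ n ih =>
    obtain ⟨O, hsO, hO, hbound⟩ := ih fun j hj => hstep j (hj.trans n.lt_succ_self)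
    obtain ⟨hs, hgreedy⟩ := hstep n n.lt_succ_self
    obtain ⟨O', hsO', hO', hbound'⟩ :=
      hgreedy.exists_isBasis_update hk hrank hos hpm hclose hsO hO
    refine ⟨O', hs ▸ hsO', hO', ?_⟩
    rw [marg, ← hs] at hbound'
    push_cast
    linarith

end Greedy

theorem stmt11_general {k : ℕ} (hk : 2 ≤ k) [Fintype V] [DecidableEq V]
    (M : FinMatroid V) (r : ℕ)
    (hrank : ∀ B : Finset V, M.IsBasis B → B.card = r)
    (f fh : (V → Fin (k+1)) → ℝ)
    (hos : OrthantSubmodular f) (hpm : PairwiseMonotone f)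
    (hf0 : 0 ≤ f (fun _ => 0))
    (ε : ℝ)
    (hclose : ∀ x, |f x - fh x| ≤ ε)
    -- the greedy sequence `s^{(0)}, …, s^{(r)}`, choosing pair `(e j, t j)` at step `j`:
    (s : ℕ → V → Fin (k+1)) (e : ℕ → V) (t : ℕ → Fin (k+1))
    (hs0 : s 0 = fun _ => 0)
    (hstep : ∀ j ∈ Finset.Icc 1 r,
      s j = Function.update (s (j-1)) (e j) (t j) ∧
      t j ≠ 0 ∧
      s (j-1) (e j) = 0 ∧
      M.Indep (insert (e j) (suppF (s (j-1)))) ∧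
      (∀ v, s (j-1) v = 0 → M.Indep (insert v (suppF (s (j-1)))) →
        ∀ i : Fin (k+1), i ≠ 0 →
        marg fh (s (j-1)) (e j) (t j) ≥ marg fh (s (j-1)) v i))
    (o : V → Fin (k+1)) (ho : M.IsBasis (suppF o)) :
    f (s r) ≥ (1/3) * f o - (4/3) * ((r : ℝ) + 1) * ε := by
  have hgreedy : ∀ j < r, s (j+1) = Function.update (s j) (e (j+1)) (t (j+1)) ∧
      IsGreedyStep M fh (s j) (e (j+1)) (t (j+1)) := fun j hj =>
    hstep (j+1) (Finset.mem_Icc.mpr ⟨j.succ_pos, hj⟩)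
  have hso : preceq (s 0) o := fun v hv => absurd (hs0 ▸ rfl) hv
  obtain ⟨O, hsO, hO, hbound⟩ := exists_isBasis_of_greedy hk hrank hos hpm hclose hgreedy hso ho
  have hcard : (suppF (s r)).card = r := by
    rw [card_suppF_greedy hgreedy, hs0]
    simp [suppF]
  obtain rfl := eq_of_preceq_of_card_suppF_le hsO (by rw [hrank _ hO, hcard])
  have hclose_s := abs_le.mp (hclose (s r))
  have hclose_0 := abs_le.mp (hclose (s 0))
  rw [hs0] at hbound hclose_0
  linarith [hclose_s.2, hclose_0.1]

/-- Robustness of the greedy algorithm for non-monotone `k`-submodular maximization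
under a matroid constraint, run with a perturbed oracle `f̂`:
`f(s) ≥ (1/3)·f(o) − (4/3)·(r+1)·ε`. -/
theorem stmt11 {k : ℕ} (hk : 2 ≤ k) [Fintype V] [DecidableEq V]
    (M : FinMatroid V) (r : ℕ) (hr1 : 1 ≤ r)
    (hrank : ∀ B : Finset V, M.IsBasis B → B.card = r)
    (f fh : (V → Fin (k+1)) → ℝ)
    (hos : OrthantSubmodular f) (hpm : PairwiseMonotone f)
    (hf0 : 0 ≤ f (fun _ => 0))
    (ε : ℝ) (hε : 0 ≤ ε)
    (hclose : ∀ x, |f x - fh x| ≤ ε)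
    -- the greedy sequence `s^{(0)}, …, s^{(r)}`, choosing pair `(e j, t j)` at step `j`:
    (s : ℕ → V → Fin (k+1)) (e : ℕ → V) (t : ℕ → Fin (k+1))
    (hs0 : s 0 = fun _ => 0)
    (hstep : ∀ j ∈ Finset.Icc 1 r,
      s j = Function.update (s (j-1)) (e j) (t j) ∧
      t j ≠ 0 ∧
      s (j-1) (e j) = 0 ∧
      M.Indep (insert (e j) (suppF (s (j-1)))) ∧
      (∀ v, s (j-1) v = 0 → M.Indep (insert v (suppF (s (j-1)))) →
        ∀ i : Fin (k+1), i ≠ 0 →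
        marg fh (s (j-1)) (e j) (t j) ≥ marg fh (s (j-1)) v i))
    (o : V → Fin (k+1)) (ho : M.IsBasis (suppF o)) :
    f (s r) ≥ (1/3) * f o - (4/3) * ((r : ℝ) + 1) * ε :=
  stmt11_general hk M r hrank f fh hos hpm hf0 ε hclose s e t hs0 hstep o ho

end Stmt11
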